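/- arXiv:1510.06003 — 4 statements merged into one kernel-verified Lean document; each statement's English description precedes it below -/
import Mathlib

section
/- Let q₂₂, q₁₁, q₀₀ ∈ ℂ with q₂₂ ≠ 0 and q₀₀ ≠ 0. The quadratic polynomial q₂₂ + q₁₁t + q₀₀t² has two roots with the same argument (i.e. roots α₁, α₂ with α₂ = ρα₁ for some real ρ > 0, or a double root) if and only if q₂₂q₀₀ = ρ q₁₁² for some real ρ with 0 ≤ ρ ≤ 1/4. -/
theorem stmt_5 (q22 q11 q00 : ℂ) (h22 : q22 ≠ 0) (h00 : q00 ≠ 0)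
    (α₁ α₂ : ℂ)
    (hroots : ∀ t : ℂ, q22 + q11 * t + q00 * t ^ 2 = q00 * (t - α₁) * (t - α₂)) :
    ((∃ ρ : ℝ, 0 < ρ ∧ α₂ = (ρ : ℂ) * α₁) ∨ α₁ = α₂)
      ↔ ∃ ρ : ℝ, 0 ≤ ρ ∧ ρ ≤ 1 / 4 ∧ q22 * q00 = (ρ : ℂ) * q11 ^ 2 := by
  have h0 := hroots 0
  have h1 := hroots 1
  have hm := hroots (-1)
  have hA : q22 = q00 * α₁ * α₂ := by linear_combination h0
  have hB : q11 = -q00 * (α₁ + α₂) := by linear_combination (h1 - hm) / 2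
  have hα₁ : α₁ ≠ 0 := by
    intro h; apply h22; rw [hA, h]; ring
  have hα₂ : α₂ ≠ 0 := by
    intro h; apply h22; rw [hA, h]; ring
  constructor
  · rintro (⟨ρ, hρ, hα⟩ | heq)
    · refine ⟨ρ / (1 + ρ) ^ 2, by positivity, ?_, ?_⟩
      · rw [div_le_div_iff₀ (by positivity) (by norm_num)]
        nlinarith [sq_nonneg (1 - ρ)]
      · have h1ρ : ((1 + ρ : ℝ) : ℂ) ≠ 0 := by
          exact_mod_cast ne_of_gt (by positivity : (0:ℝ) < 1 + ρ)
        have h1ρ' : (1 + (ρ:ℂ)) ≠ 0 := by exact_mod_cast h1ρ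
        have hc : ((ρ / (1 + ρ) ^ 2 : ℝ) : ℂ) * ((1 + ρ : ℝ) : ℂ) ^ 2 = (ρ : ℂ) := by
          push_cast
          exact div_mul_cancel₀ _ (pow_ne_zero 2 h1ρ')
        subst hα
        rw [hA, hB]
        push_cast at hc ⊢
        linear_combination (-(q00 ^ 2 * α₁ ^ 2)) * hc
    · subst heq
      refine ⟨1/4, by norm_num, by norm_num, ?_⟩
      push_cast
      rw [hA, hB]; ring
  · rintro ⟨ρ, hρ0, hρ4, hq⟩
    have hρ : 0 < ρ := by
      rcases lt_or_eq_of_le hρ0 with h | h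
      · exact h
      · exfalso
        have hz0 : q00 ^ 2 * (α₁ * α₂) = 0 := by
          rw [← h] at hq
          push_cast at hq
          linear_combination hq - q00 * hA
        rcases mul_eq_zero.mp hz0 with h' | h'
        · exact h00 ((pow_eq_zero_iff (by norm_num : (2:ℕ) ≠ 0)).mp h')
        · exact hα₁ ((mul_eq_zero.mp h').resolve_right hα₂)
    set σ := Real.sqrt (1 - 4 * ρ) with hσdef
    have hσ0 : 0 ≤ σ := Real.sqrt_nonneg _
    have hσ2 : σ ^ 2 = 1 - 4 * ρ := Real.sq_sqrt (by linarith)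
    have hσlt : σ < 1 - 2 * ρ := by
      nlinarith [mul_pos hρ hρ]
    set r₁ : ℝ := (1 - 2 * ρ + σ) / (2 * ρ) with hr₁def
    set r₂ : ℝ := (1 - 2 * ρ - σ) / (2 * ρ) with hr₂def
    have hr₁ : 0 < r₁ := div_pos (by linarith) (by linarith)
    have hr₂ : 0 < r₂ := div_pos (by linarith) (by linarith)
    have hρne : (2 * ρ : ℝ) ≠ 0 := by positivity
    have hsum : ρ * (r₁ + r₂) = 1 - 2 * ρ := by
      rw [hr₁def, hr₂def]; field_simp; ring
    have hprod : ρ * (r₁ * r₂) = ρ := by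
      have hnum : (1 - 2*ρ + σ) * (1 - 2*ρ - σ) = 2*ρ * (2*ρ) := by linear_combination -hσ2
      rw [hr₁def, hr₂def, div_mul_div_comm, hnum,
        div_self (by positivity : (2*ρ) * (2*ρ) ≠ 0), mul_one]
    have hsumC : (ρ : ℂ) * ((r₁ : ℂ) + (r₂ : ℂ)) = 1 - 2 * (ρ : ℂ) := by
      exact_mod_cast hsum
    have hprodC : (ρ : ℂ) * ((r₁ : ℂ) * (r₂ : ℂ)) = (ρ : ℂ) := by
      exact_mod_cast hprod
    have hq2 : q00 ^ 2 * (α₁ * α₂ - (ρ:ℂ) * (α₁ + α₂) ^ 2) = 0 := by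
      linear_combination hq - q00 * hA + (ρ:ℂ) * (q11 - q00 * (α₁ + α₂)) * hB
    have hq3 : α₁ * α₂ - (ρ:ℂ) * (α₁ + α₂) ^ 2 = 0 :=
      (mul_eq_zero.mp hq2).resolve_left (pow_ne_zero 2 h00)
    have key : (ρ:ℂ) * α₂ ^ 2 + (2 * (ρ:ℂ) - 1) * (α₁ * α₂) + (ρ:ℂ) * α₁ ^ 2 = 0 := by
      linear_combination (-1 : ℂ) * hq3
    have hz : ((ρ:ℂ)) * ((α₂ - (r₁:ℂ) * α₁) * (α₂ - (r₂:ℂ) * α₁)) = 0 := by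
      linear_combination key - α₁ * α₂ * hsumC + α₁ ^ 2 * hprodC
    have hρC : (ρ : ℂ) ≠ 0 := by exact_mod_cast ne_of_gt hρ
    rcases mul_eq_zero.mp ((mul_eq_zero.mp hz).resolve_left hρC) with h' | h'
    · exact Or.inl ⟨r₁, hr₁, by linear_combination h'⟩
    · exact Or.inl ⟨r₂, hr₂, by linear_combination h'⟩
end

section
/- Let p₁, p₂ ∈ ℂ. Then (|p₁−1| + |p₁+1| = |p₂−1| + |p₂+1| or |p₁−1| − |p₁+1| = |p₂−1| − |p₂+1|) implies p₁ + conj(p₁) + p₂ + conj(p₂) + |p₁−1||p₂−1| − |p₁+1||p₂+1| = 0. Conversely, if this last equation holds, then |p₁−1| + |p₁+1| = |p₂−1| + |p₂+1| or |p₁−1| − |p₁+1| = |p₂−1| − |p₂+1|. -/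
/-! Since `4 Re p = ‖p + 1‖² - ‖p - 1‖²`, the left side of the equation is half of
`(‖p₁ + 1‖ - ‖p₂ + 1‖)² - (‖p₁ - 1‖ - ‖p₂ - 1‖)²`. It vanishes exactly when the two differences
agree up to sign, and the two signs give the two disjuncts. -/

open ComplexConjugate

theorem Complex.norm_add_one_sq_sub_norm_sub_one_sq (p : ℂ) :
    ‖p + 1‖ ^ 2 - ‖p - 1‖ ^ 2 = 4 * p.re := by
  rw [Complex.sq_norm, Complex.sq_norm, Complex.normSq_apply, Complex.normSq_apply]
  simp only [Complex.add_re, Complex.add_im, Complex.sub_re, Complex.sub_im, Complex.one_re,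
    Complex.one_im]
  ring

theorem Complex.add_conj_add_add_conj_add_norm_mul_sub_norm_mul (p₁ p₂ : ℂ) :
    p₁ + conj p₁ + p₂ + conj p₂ + ((‖p₁ - 1‖ * ‖p₂ - 1‖ : ℝ) : ℂ)
        - ((‖p₁ + 1‖ * ‖p₂ + 1‖ : ℝ) : ℂ)
      = (((‖p₁ + 1‖ - ‖p₂ + 1‖) ^ 2 - (‖p₁ - 1‖ - ‖p₂ - 1‖) ^ 2) / 2 : ℝ) := by
  apply Complex.ext
  · simp only [Complex.add_re, Complex.sub_re, Complex.conj_re, Complex.ofReal_re]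
    linear_combination -(Complex.norm_add_one_sq_sub_norm_sub_one_sq p₁
      + Complex.norm_add_one_sq_sub_norm_sub_one_sq p₂) / 2
  · simp only [Complex.add_im, Complex.sub_im, Complex.conj_im, Complex.ofReal_im]
    ring

theorem add_eq_add_or_sub_eq_sub_iff_sub_sq_eq_sub_sq {R : Type*} [CommRing R] [NoZeroDivisors R]
    (a₁ b₁ a₂ b₂ : R) :
    (a₁ + b₁ = a₂ + b₂ ∨ a₁ - b₁ = a₂ - b₂) ↔ (a₁ - a₂) ^ 2 = (b₁ - b₂) ^ 2 := by
  rw [sq_eq_sq_iff_eq_or_eq_neg, or_comm]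
  refine or_congr ?_ ?_ <;> constructor <;> intro h <;> linear_combination h

theorem stmt_8 (p₁ p₂ : ℂ) :
    (‖p₁ - 1‖ + ‖p₁ + 1‖
        = ‖p₂ - 1‖ + ‖p₂ + 1‖
      ∨ ‖p₁ - 1‖ - ‖p₁ + 1‖
        = ‖p₂ - 1‖ - ‖p₂ + 1‖)
    ↔ p₁ + (starRingEnd ℂ) p₁ + p₂ + (starRingEnd ℂ) p₂
        + ((‖p₁ - 1‖ * ‖p₂ - 1‖ : ℝ) : ℂ)
        - ((‖p₁ + 1‖ * ‖p₂ + 1‖ : ℝ) : ℂ) = 0 := by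
  rw [add_eq_add_or_sub_eq_sub_iff_sub_sq_eq_sub_sq,
    Complex.add_conj_add_add_conj_add_norm_mul_sub_norm_mul, Complex.ofReal_eq_zero]
  constructor <;> intro h <;> linarith
end

section
/- Let D be a bounded convex open subset of ℂ and p a polynomial of degree n ≥ 1 all of whose roots lie in the closure of D. Then all roots of p' lie in the closure of D. -/
open Polynomial

theorem Polynomial.mem_of_isRoot_derivative_of_convex {P : ℂ[X]} {s : Set ℂ} (hs : Convex ℝ s)
    (hP : 0 < P.degree) (hroots : ∀ w, P.IsRoot w → w ∈ s) {z : ℂ}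
    (hz : P.derivative.IsRoot z) : z ∈ s := by
  rw [eq_centerMass_of_eval_derivative_eq_zero hP hz]
  exact hs.centerMass_mem (fun w _ ↦ derivRootWeight_nonneg P z w)
    (sum_derivRootWeight_pos hP z) fun w hw ↦
      hroots w (isRoot_of_mem_roots (Multiset.mem_toFinset.mp hw))

theorem stmt_14_general (D : Set ℂ) (hconv : Convex ℝ D)
    (p : Polynomial ℂ) (n : ℕ) (hdeg : p.natDegree = n) (hn : 1 ≤ n)
    (hroots : ∀ z : ℂ, p.IsRoot z → z ∈ closure D) :
    ∀ z : ℂ, (Polynomial.derivative p).IsRoot z → z ∈ closure D := by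
  have hp : 0 < p.degree := natDegree_pos_iff_degree_pos.mp (hdeg ▸ hn)
  exact fun z hz ↦ mem_of_isRoot_derivative_of_convex hconv.closure hp hroots hz

theorem stmt_14 (D : Set ℂ) (hD : IsOpen D) (hconv : Convex ℝ D)
    (hbd : Bornology.IsBounded D)
    (p : Polynomial ℂ) (n : ℕ) (hdeg : p.natDegree = n) (hn : 1 ≤ n)
    (hroots : ∀ z : ℂ, p.IsRoot z → z ∈ closure D) :
    ∀ z : ℂ, (Polynomial.derivative p).IsRoot z → z ∈ closure D :=
  stmt_14_general D hconv p n hdeg hn hroots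
end

section
/- Suppose that for a sequence of Jacobi parameters (α_n, β_n), the quotients (α_n + β_n)/n → ∞ in absolute value and (β_n − α_n)/(α_n + β_n) → κ ∈ ℂ, and suppose C : U → ℂ is a function on an open set U ⊆ ℂ such that for each z ∈ U the limits C_n(z) := p_n'(z)/(n p_n(z)) → C(z) and p_n''(z)/((n−1)p_n'(z)) → C(z) both hold, where p_n = P_n^{(α_n,β_n)} satisfies (1−z²)p_n'' + ((β_n−α_n) − (α_n+β_n+2)z)p_n' + n(n+α_n+β_n+1)p_n = 0. Then (z − κ)C(z) = 1 for every z ∈ U. -/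
/-! Divide the Jacobi equation at `z` by `n (α_n + β_n) p_n(z)`. Writing `u_n = p_n'/(n p_n)` and
`v_n = p_n''/((n-1) p_n')`, it becomes
`(1 - z²) v_n u_n (n - 1)/(α_n + β_n) + ((β_n - α_n)/(α_n + β_n) - z - 2z/(α_n + β_n)) u_n
  + n/(α_n + β_n) + 1 + 1/(α_n + β_n) = 0`.
Since `n/(α_n + β_n) → 0`, also `1/(α_n + β_n) → 0`, and letting `n → ∞` leaves
`(κ - z) C(z) + 1 = 0`. -/

open Filter Topology Polynomial

theorem tendsto_div_nhds_zero_of_tendsto_norm_div_atTop {ι 𝕜 : Type*} [NormedDivisionRing 𝕜]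
    {l : Filter ι} {f g : ι → 𝕜} (h : Tendsto (fun i => ‖f i / g i‖) l atTop) :
    Tendsto (fun i => g i / f i) l (𝓝 0) := by
  simpa only [Function.comp_def, inv_div] using
    tendsto_inv₀_cobounded.comp (tendsto_norm_atTop_iff_cobounded.mp h)

theorem tendsto_inv_nhds_zero_of_tendsto_norm_div_natCast_atTop {𝕜 : Type*} [RCLike 𝕜]
    {a : ℕ → 𝕜} (h : Tendsto (fun n => ‖a n / n‖) atTop atTop) :
    Tendsto (fun n => (a n)⁻¹) atTop (𝓝 0) := by
  have hlim := (tendsto_div_nhds_zero_of_tendsto_norm_div_atTop h).mul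
    (tendsto_inv_atTop_nhds_zero_nat (𝕜 := 𝕜))
  rw [zero_mul] at hlim
  refine hlim.congr' ?_
  filter_upwards [eventually_ne_atTop 0] with n hn
  rw [div_eq_mul_inv, mul_right_comm, mul_inv_cancel₀ (Nat.cast_ne_zero.mpr hn), one_mul]

theorem jacobi_eq_div {K : Type*} [Field K] {z α β m P D₁ D₂ : K}
    (hm : m ≠ 0) (hm₁ : m - 1 ≠ 0) (hab : α + β ≠ 0) (hP : P ≠ 0) (hD₁ : D₁ ≠ 0)
    (hode : (1 - z ^ 2) * D₂ + ((β - α) - (α + β + 2) * z) * D₁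
      + m * (m + α + β + 1) * P = 0) :
    (1 - z ^ 2) * (D₂ / ((m - 1) * D₁)) * (D₁ / (m * P)) * (m / (α + β) - (α + β)⁻¹)
      + ((β - α) / (α + β) - z - 2 * z * (α + β)⁻¹) * (D₁ / (m * P))
      + (m / (α + β) + 1 + (α + β)⁻¹) = 0 := by
  field_simp
  linear_combination hode

theorem mul_sub_eq_one_of_tendsto {z κ c : ℂ} {u v r e k : ℕ → ℂ}
    (hu : Tendsto u atTop (𝓝 c)) (hv : Tendsto v atTop (𝓝 c)) (hr : Tendsto r atTop (𝓝 0))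
    (he : Tendsto e atTop (𝓝 0)) (hk : Tendsto k atTop (𝓝 κ))
    (heq : ∀ᶠ n in atTop, (1 - z ^ 2) * v n * u n * (r n - e n)
      + (k n - z - 2 * z * e n) * u n + (r n + 1 + e n) = 0) :
    (z - κ) * c = 1 := by
  have hlim := ((tendsto_const_nhds (x := 1 - z ^ 2)).mul hv |>.mul hu |>.mul (hr.sub he)).add
    ((hk.sub_const z |>.sub (he.const_mul (2 * z))).mul hu) |>.add ((hr.add_const 1).add he)
  have := tendsto_nhds_unique (hlim.congr' heq) tendsto_const_nhds
  linear_combination -this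

theorem stmt_17_general (α β : ℕ → ℂ) (κ : ℂ)
    (h1 : Tendsto (fun n => ‖(α n + β n) / (n : ℂ)‖) atTop atTop)
    (h2 : Tendsto (fun n => (β n - α n) / (α n + β n)) atTop (𝓝 κ))
    (p : ℕ → Polynomial ℂ)
    (hODE : ∀ n : ℕ,
      (1 - X ^ 2) * derivative (derivative (p n))
        + (C (β n - α n) - C (α n + β n + 2) * X) * derivative (p n)
        + C ((n : ℂ) * ((n : ℂ) + α n + β n + 1)) * (p n) = 0)
    (U : Set ℂ) (F : ℂ → ℂ)
    (hnz : ∀ z ∈ U, ∀ᶠ n in atTop,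
      (p n).eval z ≠ 0 ∧ (derivative (p n)).eval z ≠ 0)
    (hF : ∀ z ∈ U,
      Tendsto (fun n => (derivative (p n)).eval z / ((n : ℂ) * (p n).eval z))
        atTop (𝓝 (F z)))
    (hF' : ∀ z ∈ U,
      Tendsto (fun n => (derivative (derivative (p n))).eval z
          / (((n : ℂ) - 1) * (derivative (p n)).eval z))
        atTop (𝓝 (F z))) :
    ∀ z ∈ U, (z - κ) * F z = 1 := by
  intro z hz
  refine mul_sub_eq_one_of_tendsto (hF z hz) (hF' z hz)
    (tendsto_div_nhds_zero_of_tendsto_norm_div_atTop h1)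
    (tendsto_inv_nhds_zero_of_tendsto_norm_div_natCast_atTop h1) h2 ?_
  filter_upwards [hnz z hz, h1.eventually_gt_atTop 0, eventually_gt_atTop 1]
    with n ⟨hP, hD₁⟩ hab hn
  refine jacobi_eq_div (by norm_cast; omega) (sub_ne_zero.mpr (by norm_cast; omega))
    (fun h => by simp [h] at hab) hP hD₁ ?_
  simpa using congrArg (eval z) (hODE n)

theorem stmt_17 (α β : ℕ → ℂ) (κ : ℂ)
    (h1 : Tendsto (fun n => ‖(α n + β n) / (n : ℂ)‖) atTop atTop)
    (h2 : Tendsto (fun n => (β n - α n) / (α n + β n)) atTop (𝓝 κ))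
    (p : ℕ → Polynomial ℂ)
    (hODE : ∀ n : ℕ,
      (1 - X ^ 2) * derivative (derivative (p n))
        + (C (β n - α n) - C (α n + β n + 2) * X) * derivative (p n)
        + C ((n : ℂ) * ((n : ℂ) + α n + β n + 1)) * (p n) = 0)
    (U : Set ℂ) (hU : IsOpen U) (F : ℂ → ℂ)
    (hnz : ∀ z ∈ U, ∀ᶠ n in atTop,
      (p n).eval z ≠ 0 ∧ (derivative (p n)).eval z ≠ 0)
    (hF : ∀ z ∈ U,
      Tendsto (fun n => (derivative (p n)).eval z / ((n : ℂ) * (p n).eval z))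
        atTop (𝓝 (F z)))
    (hF' : ∀ z ∈ U,
      Tendsto (fun n => (derivative (derivative (p n))).eval z
          / (((n : ℂ) - 1) * (derivative (p n)).eval z))
        atTop (𝓝 (F z))) :
    ∀ z ∈ U, (z - κ) * F z = 1 :=
  stmt_17_general α β κ h1 h2 p hODE U F hnz hF hF'
end
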